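/- Let $Y$ be a Bernoulli random variable with probability of success $p$. Then for every integer $n \ge 1$ and every real number $x$, $B_n^{(L,Y)}(x) = B_n^L(px)$. -/

import Mathlib

/-!
Expanding rising factorials in falling factorials, `⟨x⟩_n = ∑ₖ L(n,k) (x)_k`. If `S_l` is a sum
of `l` independent Bernoulli(`p`) variables, then `(S_l)_k` is `k!` times the number of `k`-sets
of successes, so `E[(S_l)_k] = k! C(l,k) p^k` and `E[⟨S_l⟩_n] = ∑ₖ L(n,k) k! p^k C(l,k)`. The
alternating sum defining `L_Y(n,k)` is the `k`-th forward difference in `l`, which isolates the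
`k`-th term: `L_Y(n,k) = L(n,k) p^k`.
-/

open MeasureTheory ProbabilityTheory Finset

/-- The rising factorial `⟨x⟩_n = x (x+1) ⋯ (x+n-1)`, with `⟨x⟩_0 = 1`. -/
noncomputable def asc (x : ℝ) : ℕ → ℝ
  | 0 => 1
  | n + 1 => asc x n * (x + n)

/-- The probabilistic Lah numbers associated with the random variable `Y`, defined from
the iid copies `Ys` of `Y` via `L_Y(n,k) = (1/k!) ∑_{l=0}^k C(k,l) (-1)^{k-l} E[⟨S_l⟩_n]`,
where `S_l = Y_1 + ⋯ + Y_l`. -/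
noncomputable def probLah {Ω : Type*} [MeasurableSpace Ω] (μ : Measure Ω)
    (Ys : ℕ → Ω → ℝ) (n k : ℕ) : ℝ :=
  (k.factorial : ℝ)⁻¹ * ∑ l ∈ Finset.range (k + 1),
    (k.choose l : ℝ) * (-1) ^ (k - l) * ∫ ω, asc (∑ j ∈ Finset.range l, Ys j ω) n ∂μ

/-- The probabilistic Lah-Bell polynomials `B_n^{(L,Y)}(x) = ∑_{k=0}^n L_Y(n,k) x^k`. -/
noncomputable def probLahBell {Ω : Type*} [MeasurableSpace Ω] (μ : Measure Ω)
    (Ys : ℕ → Ω → ℝ) (n : ℕ) (x : ℝ) : ℝ :=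
  ∑ k ∈ Finset.range (n + 1), probLah μ Ys n k * x ^ k

/-- The unsigned Lah numbers: `L(n,k) = n!/k! · C(n-1,k-1)` for `1 ≤ k ≤ n`,
with `L(0,0) = 1` and `L(n,0) = 0` for `n ≥ 1`. -/
noncomputable def Lah (n k : ℕ) : ℝ :=
  if k = 0 then (if n = 0 then 1 else 0)
  else if k ≤ n then (n.factorial : ℝ) / (k.factorial : ℝ) * ((n - 1).choose (k - 1) : ℝ)
  else 0

/-- The Lah-Bell polynomial `B_n^L(x) = ∑_{k=0}^n L(n,k) x^k`. -/
noncomputable def LahBell (n : ℕ) (x : ℝ) : ℝ :=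
  ∑ k ∈ Finset.range (n + 1), Lah n k * x ^ k

open Polynomial

lemma asc_eq_ascPochhammer_eval (x : ℝ) (n : ℕ) : asc x n = (ascPochhammer ℝ n).eval x := by
  induction n with
  | zero => simp [asc]
  | succ n ih => rw [asc, ih, ascPochhammer_succ_eval]

lemma Lah_eq_zero_of_lt {n k : ℕ} (h : n < k) : Lah n k = 0 := by
  simp [Lah, show k ≠ 0 by omega, show ¬ k ≤ n by omega]

lemma Lah_succ (m k : ℕ) :
    Lah (m + 1) k = (m + 1).choose k * m.descFactorial (m + 1 - k) := by
  rcases Nat.eq_zero_or_pos k with rfl | hk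
  · simp [Lah]
  rcases lt_or_ge (m + 1) k with hlt | hle
  · simp [Lah_eq_zero_of_lt hlt, Nat.choose_eq_zero_of_lt hlt]
  obtain ⟨j, rfl⟩ : ∃ j, k = j + 1 := ⟨k - 1, by omega⟩
  have key : (j + 1).factorial * ((m + 1).choose (j + 1) * m.descFactorial (m - j))
      = (m + 1).factorial * m.choose j := by
    have hfac := Nat.choose_mul_factorial_mul_factorial (show j + 1 ≤ m + 1 by omega)
    rw [Nat.add_sub_add_right] at hfac
    rw [Nat.descFactorial_eq_factorial_mul_choose, Nat.choose_symm (by omega), ← hfac]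
    ring
  simp only [Lah, Nat.add_one_ne_zero, if_false, if_pos hle, add_tsub_cancel_right,
    Nat.add_sub_add_right]
  rw [div_mul_eq_mul_div, div_eq_iff (by positivity)]
  exact_mod_cast key.symm.trans (by ring)

/-- `⟨x⟩_{m+1} = (x + m)_{m+1}`, and Chu–Vandermonde splits this into falling factorials of `x`
and of `m`; the coefficients are the Lah numbers in the form `Lah_succ`. -/
lemma asc_eq_sum_Lah_mul_descPochhammer (x : ℝ) (n : ℕ) :
    asc x n = ∑ k ∈ range (n + 1), Lah n k * (descPochhammer ℤ k).smeval x := by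
  rcases n with _ | m
  · simp [asc, Lah]
  have hshift : x + m - ((m + 1 : ℕ) : ℝ) + 1 = x := by push_cast; ring
  rw [asc_eq_ascPochhammer_eval, ← ascPochhammer_smeval_eq_eval]
  conv_lhs => rw [← hshift]
  rw [← descPochhammer_smeval_eq_ascPochhammer, Ring.descPochhammer_smeval_add _ (Commute.all _ _),
    Nat.sum_antidiagonal_eq_sum_range_succ_mk]
  refine sum_congr rfl fun k _ => ?_
  rw [descPochhammer_smeval_eq_descFactorial, Lah_succ]
  push_cast
  ring

lemma sum_neg_one_pow_mul_choose_mul_choose (k j : ℕ) :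
    ∑ l ∈ range (k + 1), (-1 : ℤ) ^ (k - l) * k.choose l * l.choose j = if k = j then 1 else 0 := by
  have := fwdDiff_iter_eq_sum_shift 1 (fun x ↦ x.choose j : ℕ → ℤ) k 0
  rw [fwdDiff_iter_choose_zero] at this
  simpa using this.symm

lemma sum_choose_mul_neg_one_pow_mul_sum_mul_choose {R : Type*} [CommRing R] (c : ℕ → R)
    (N k : ℕ) :
    ∑ l ∈ range (k + 1), (k.choose l : R) * (-1) ^ (k - l) * ∑ j ∈ range (N + 1), c j * l.choose j
      = if k ∈ range (N + 1) then c k else 0 := by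
  have hdelta (j : ℕ) : ∑ l ∈ range (k + 1), (k.choose l : R) * (-1) ^ (k - l) * l.choose j
      = if k = j then 1 else 0 := by
    have := congrArg (Int.cast : ℤ → R) (sum_neg_one_pow_mul_choose_mul_choose k j)
    push_cast at this
    rw [← this]
    exact sum_congr rfl fun l _ => by ring
  simp_rw [mul_sum]
  rw [sum_comm]
  simp_rw [← mul_assoc, mul_comm _ (c _), mul_assoc (c _), ← mul_sum, hdelta]
  simp

lemma descPochhammer_smeval_sum_of_zero_or_one {ι : Type*} (s : Finset ι)
    (y : ι → ℝ) (hy : ∀ i ∈ s, y i = 0 ∨ y i = 1) (j : ℕ) :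
    (descPochhammer ℤ j).smeval (∑ i ∈ s, y i)
      = j.factorial * ∑ T ∈ s.powersetCard j, if ∀ i ∈ T, y i = 1 then 1 else 0 := by
  set ones := s.filter (fun i => y i = 1)
  have hsum : ∑ i ∈ s, y i = #ones := by
    rw [← sum_filter_add_sum_filter_not s (fun i => y i = 1), sum_congr rfl fun i hi =>
      (mem_filter.1 hi).2, sum_eq_zero fun i hi => ((hy i (mem_filter.1 hi).1).resolve_right
      (mem_filter.1 hi).2)]
    simp [ones]
  have hcount : (s.powersetCard j).filter (fun T => ∀ i ∈ T, y i = 1) = ones.powersetCard j := by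
    ext T
    simp only [mem_filter, mem_powersetCard, ones, subset_iff]
    constructor
    · rintro ⟨⟨hTs, hcard⟩, hT⟩
      exact ⟨fun i hi => ⟨hTs hi, hT i hi⟩, hcard⟩
    · rintro ⟨hT, hcard⟩
      exact ⟨⟨fun i hi => (hT hi).1, hcard⟩, fun i hi => (hT hi).2⟩
  rw [hsum, descPochhammer_smeval_eq_descFactorial, Nat.descFactorial_eq_factorial_mul_choose,
    ← sum_filter, sum_const, hcount, card_powersetCard]
  simp

section Bernoulli

variable {Ω : Type*} [MeasurableSpace Ω] {μ : Measure Ω}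

lemma ae_mem_zero_one_of_measure_eq [IsProbabilityMeasure μ] {Y : Ω → ℝ} (hY : Measurable Y)
    {p : ℝ} (hp0 : 0 ≤ p) (hp1 : p ≤ 1) (hber1 : μ {ω | Y ω = 1} = ENNReal.ofReal p)
    (hber0 : μ {ω | Y ω = 0} = ENNReal.ofReal (1 - p)) :
    ∀ᵐ ω ∂μ, Y ω ∈ ({0, 1} : Set ℝ) := by
  have hdisj : Disjoint {ω | Y ω = 0} {ω | Y ω = 1} :=
    Set.disjoint_left.2 fun ω h0 h1 => zero_ne_one (h0.symm.trans h1)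
  rw [ae_iff_measure_eq (hY ((measurableSet_singleton 1).insert 0)).nullMeasurableSet, measure_univ]
  rw [show {ω | Y ω ∈ ({0, 1} : Set ℝ)} = {ω | Y ω = 0} ∪ {ω | Y ω = 1} by ext; simp,
    measure_union hdisj (hY (measurableSet_singleton 1)), hber0, hber1,
    ← ENNReal.ofReal_add (by linarith) hp0]
  simp

section

variable {ι : Type*} {Ys : ι → Ω → ℝ}

lemma measureReal_iInter_preimage_one (hindep : iIndepFun Ys μ) {p : ℝ} (hp : 0 ≤ p)
    (h1 : ∀ i, μ (Ys i ⁻¹' {1}) = ENNReal.ofReal p) (T : Finset ι) :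
    μ.real (⋂ i ∈ T, Ys i ⁻¹' {1}) = p ^ #T := by
  rw [measureReal_def, hindep.measure_inter_preimage_eq_mul T fun _ _ => measurableSet_singleton 1]
  simp [h1, hp]

lemma descPochhammer_smeval_sum_ae_eq (h01 : ∀ i, ∀ᵐ ω ∂μ, Ys i ω = 0 ∨ Ys i ω = 1)
    (s : Finset ι) (j : ℕ) :
    (fun ω => (descPochhammer ℤ j).smeval (∑ i ∈ s, Ys i ω)) =ᵐ[μ]
      fun ω => j.factorial * ∑ T ∈ s.powersetCard j, (⋂ i ∈ T, Ys i ⁻¹' {1}).indicator 1 ω := by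
  filter_upwards [(s.eventually_all).2 fun i _ => h01 i] with ω hω
  rw [descPochhammer_smeval_sum_of_zero_or_one s _ hω]
  congr 1
  refine sum_congr rfl fun T _ => ?_
  simp [Set.indicator]

lemma integral_asc_sum [IsFiniteMeasure μ] (hindep : iIndepFun Ys μ)
    (hmeas : ∀ i, Measurable (Ys i)) (h01 : ∀ i, ∀ᵐ ω ∂μ, Ys i ω = 0 ∨ Ys i ω = 1)
    {p : ℝ} (hp : 0 ≤ p) (h1 : ∀ i, μ (Ys i ⁻¹' {1}) = ENNReal.ofReal p) (s : Finset ι) (n : ℕ) :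
    ∫ ω, asc (∑ i ∈ s, Ys i ω) n ∂μ
      = ∑ k ∈ range (n + 1), Lah n k * k.factorial * p ^ k * (#s).choose k := by
  have hA (T : Finset ι) : MeasurableSet (⋂ i ∈ T, Ys i ⁻¹' {1}) :=
    T.measurableSet_biInter fun i _ => hmeas i (measurableSet_singleton 1)
  have hint (k : ℕ) : Integrable (fun ω => (descPochhammer ℤ k).smeval (∑ i ∈ s, Ys i ω)) μ :=
    ((integrable_finsetSum _ fun T _ => (integrable_const 1).indicator (hA T)).const_mul
      _).congr (descPochhammer_smeval_sum_ae_eq h01 s k).symm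
  have hmoment (k : ℕ) : ∫ ω, (descPochhammer ℤ k).smeval (∑ i ∈ s, Ys i ω) ∂μ
      = k.factorial * p ^ k * (#s).choose k := by
    rw [integral_congr_ae (descPochhammer_smeval_sum_ae_eq h01 s k), integral_const_mul,
      integral_finsetSum _ fun T _ => (integrable_const 1).indicator (hA T),
      sum_congr rfl fun T hT => by
        rw [integral_indicator_one (hA T), measureReal_iInter_preimage_one hindep hp h1,
          (mem_powersetCard.1 hT).2],
      sum_const, card_powersetCard, nsmul_eq_mul, mul_comm _ (p ^ k), mul_assoc]
  simp_rw [asc_eq_sum_Lah_mul_descPochhammer]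
  rw [integral_finsetSum _ fun k _ => (hint k).const_mul _]
  refine sum_congr rfl fun k _ => ?_
  rw [integral_const_mul, hmoment]
  ring

end

lemma probLah_eq_Lah_mul_pow [IsFiniteMeasure μ] {Ys : ℕ → Ω → ℝ} (hindep : iIndepFun Ys μ)
    (hmeas : ∀ i, Measurable (Ys i)) (h01 : ∀ i, ∀ᵐ ω ∂μ, Ys i ω = 0 ∨ Ys i ω = 1)
    {p : ℝ} (hp : 0 ≤ p) (h1 : ∀ i, μ (Ys i ⁻¹' {1}) = ENNReal.ofReal p) (n k : ℕ) :
    probLah μ Ys n k = Lah n k * p ^ k := by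
  simp_rw [probLah, integral_asc_sum hindep hmeas h01 hp h1, card_range,
    sum_choose_mul_neg_one_pow_mul_sum_mul_choose]
  split_ifs with hk
  · field_simp
  · rw [Lah_eq_zero_of_lt (by simpa using hk)]
    simp

lemma probLahBell_eq_LahBell_mul [IsFiniteMeasure μ] {Ys : ℕ → Ω → ℝ}
    (hindep : iIndepFun Ys μ) (hmeas : ∀ i, Measurable (Ys i))
    (h01 : ∀ i, ∀ᵐ ω ∂μ, Ys i ω = 0 ∨ Ys i ω = 1) {p : ℝ} (hp : 0 ≤ p)
    (h1 : ∀ i, μ (Ys i ⁻¹' {1}) = ENNReal.ofReal p) (n : ℕ) (x : ℝ) :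
    probLahBell μ Ys n x = LahBell n (p * x) := by
  simp_rw [probLahBell, LahBell, probLah_eq_Lah_mul_pow hindep hmeas h01 hp h1, mul_pow, mul_assoc]

end Bernoulli

theorem statement_15_general {Ω : Type*} [MeasurableSpace Ω] (μ : Measure Ω) [IsProbabilityMeasure μ]
    (Y : Ω → ℝ) (Ys : ℕ → Ω → ℝ)
    (hY : Measurable Y) (hYs : ∀ j, Measurable (Ys j))
    (hid : ∀ j, IdentDistrib (Ys j) Y μ μ)
    (hindep : iIndepFun Ys μ)
    (p : ℝ) (hp0 : 0 ≤ p) (hp1 : p ≤ 1)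
    (hber1 : μ {ω | Y ω = 1} = ENNReal.ofReal p)
    (hber0 : μ {ω | Y ω = 0} = ENNReal.ofReal (1 - p))
    (n : ℕ) (x : ℝ) :
    probLahBell μ Ys n x = LahBell n (p * x) := by
  have hY01 := ae_mem_zero_one_of_measure_eq hY hp0 hp1 hber1 hber0
  exact probLahBell_eq_LahBell_mul hindep hYs
    (fun i => (hid i).symm.ae_mem_snd ((measurableSet_singleton 1).insert 0) hY01) hp0
    (fun i => ((hid i).measure_mem_eq (measurableSet_singleton 1)).trans hber1) n x

theorem statement_15 {Ω : Type*} [MeasurableSpace Ω] (μ : Measure Ω) [IsProbabilityMeasure μ]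
    (Y : Ω → ℝ) (Ys : ℕ → Ω → ℝ)
    (hY : Measurable Y) (hYs : ∀ j, Measurable (Ys j))
    (hid : ∀ j, IdentDistrib (Ys j) Y μ μ)
    (hindep : iIndepFun Ys μ)
    (p : ℝ) (hp0 : 0 ≤ p) (hp1 : p ≤ 1)
    (hber1 : μ {ω | Y ω = 1} = ENNReal.ofReal p)
    (hber0 : μ {ω | Y ω = 0} = ENNReal.ofReal (1 - p))
    (n : ℕ) (hn : 1 ≤ n) (x : ℝ) :
    probLahBell μ Ys n x = LahBell n (p * x) :=
  statement_15_general μ Y Ys hY hYs hid hindep p hp0 hp1 hber1 hber0 n x
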